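/- Let M be an n×n symmetric zero-diagonal matrix with all entries non-negative even integers, and let M02 be the (0,2)-matrix obtained from M by replacing every non-zero entry with 2. If M02 is the CN matrix of some braid projection word on n strands, then M is the CN matrix of some pure braid projection word on n strands. -/

import Mathlib

/-- Left position of a crossing letter, as an element of `Fin n`. -/
def posL (n : ℕ) (k : Fin (n - 1)) : Fin n := ⟨k.val, by have := k.isLt; omega⟩

/-- Right position of a crossing letter, as an element of `Fin n`. -/
def posR (n : ℕ) (k : Fin (n - 1)) : Fin n := ⟨k.val + 1, by have := k.isLt; omega⟩

/-- The transposition of positions induced by a crossing letter. -/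
def braidSwap (n : ℕ) (k : Fin (n - 1)) : Equiv.Perm (Fin n) :=
  Equiv.swap (posL n k) (posR n k)

/-- CN matrix of a braid projection word, scanning with position-to-strand
assignment `π`.  Each letter records one crossing between the two strand
labels currently at the involved positions (counted symmetrically). -/
def CNaux (n : ℕ) : Equiv.Perm (Fin n) → List (Fin (n - 1)) → Matrix (Fin n) (Fin n) ℕ
  | _, [] => 0
  | π, k :: w =>
      Matrix.single (π (posL n k)) (π (posR n k)) 1 +
      Matrix.single (π (posR n k)) (π (posL n k)) 1 +
      CNaux n (π * braidSwap n k) w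

/-- CN matrix of a braid projection word on `n` strands. -/
def CN (n : ℕ) (w : List (Fin (n - 1))) : Matrix (Fin n) (Fin n) ℕ := CNaux n 1 w

/-- Final position-to-strand assignment after scanning the word. -/
def finalPerm (n : ℕ) : Equiv.Perm (Fin n) → List (Fin (n - 1)) → Equiv.Perm (Fin n)
  | π, [] => π
  | π, k :: w => finalPerm n (π * braidSwap n k) w

/-- A braid projection word is pure if the induced permutation of strands
is the identity. -/
def IsPure (n : ℕ) (w : List (Fin (n - 1))) : Prop := finalPerm n 1 w = 1

/-- A zero-diagonal matrix is T0 if `i < j < k`, `M i j = 0` and `M j k = 0`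
imply `M i k = 0`. -/
def IsT0 {n : ℕ} {α : Type*} [Zero α] (M : Matrix (Fin n) (Fin n) α) : Prop :=
  ∀ i j k : Fin n, i < j → j < k → M i j = 0 → M j k = 0 → M i k = 0

/-! Replacing a letter by an odd power of itself leaves the induced permutation unchanged and
multiplies the crossing it records by that power. So in a word realising the `(0,2)`-pattern of `M`,
one replaces the first crossing of each crossing pair `{a, b}` by `M a b - 1` copies of it. Purity is a
parity argument: two strands change their relative order exactly when they cross, so if every pair
crosses an even number of times the final order of the strands is the initial one. -/

def crossingMatrix (n : ℕ) (π : Equiv.Perm (Fin n)) (k : Fin (n - 1)) :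
    Matrix (Fin n) (Fin n) ℕ :=
  Matrix.single (π (posL n k)) (π (posR n k)) 1 + Matrix.single (π (posR n k)) (π (posL n k)) 1

section BraidWord

variable {n : ℕ}

lemma posL_ne_posR (k : Fin (n - 1)) : posL n k ≠ posR n k := by
  simp [posL, posR, Fin.ext_iff]

lemma braidSwap_mul_self (k : Fin (n - 1)) : braidSwap n k * braidSwap n k = 1 :=
  Equiv.swap_mul_self _ _

lemma braidSwap_pow_odd (k : Fin (n - 1)) (m : ℕ) :
    braidSwap n k ^ (2 * m + 1) = braidSwap n k := by
  rw [pow_succ, pow_mul, sq, braidSwap_mul_self, one_pow, one_mul]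

lemma crossingMatrix_apply (π : Equiv.Perm (Fin n)) (k : Fin (n - 1)) (a b : Fin n) :
    crossingMatrix n π k a b = if s(a, b) = s(π (posL n k), π (posR n k)) then 1 else 0 := by
  have hne : π (posL n k) ≠ π (posR n k) := π.injective.ne (posL_ne_posR k)
  simp only [crossingMatrix, Matrix.add_apply, Matrix.single_apply, Sym2.eq_iff]
  split_ifs <;> grind

lemma crossingMatrix_mul_braidSwap (π : Equiv.Perm (Fin n)) (k : Fin (n - 1)) :
    crossingMatrix n (π * braidSwap n k) k = crossingMatrix n π k := by
  simp only [crossingMatrix, braidSwap, Equiv.Perm.mul_apply, Equiv.swap_apply_left,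
    Equiv.swap_apply_right]
  exact add_comm _ _

lemma CNaux_cons (π : Equiv.Perm (Fin n)) (k : Fin (n - 1)) (w : List (Fin (n - 1))) :
    CNaux n π (k :: w) = crossingMatrix n π k + CNaux n (π * braidSwap n k) w :=
  rfl

lemma finalPerm_append (π : Equiv.Perm (Fin n)) (u v : List (Fin (n - 1))) :
    finalPerm n π (u ++ v) = finalPerm n (finalPerm n π u) v := by
  induction u generalizing π with
  | nil => rfl
  | cons k u ih => exact ih _

lemma CNaux_append (π : Equiv.Perm (Fin n)) (u v : List (Fin (n - 1))) :
    CNaux n π (u ++ v) = CNaux n π u + CNaux n (finalPerm n π u) v := by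
  induction u generalizing π with
  | nil => simp [CNaux, finalPerm]
  | cons k u ih => rw [List.cons_append, CNaux_cons, CNaux_cons, ih, add_assoc]; rfl

lemma finalPerm_replicate (π : Equiv.Perm (Fin n)) (k : Fin (n - 1)) (m : ℕ) :
    finalPerm n π (List.replicate m k) = π * braidSwap n k ^ m := by
  induction m generalizing π with
  | zero => simp [finalPerm]
  | succ m ih => rw [List.replicate_succ, finalPerm, ih, pow_succ', mul_assoc]

lemma CNaux_replicate (π : Equiv.Perm (Fin n)) (k : Fin (n - 1)) (m : ℕ) :
    CNaux n π (List.replicate m k) = m • crossingMatrix n π k := by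
  induction m generalizing π with
  | zero => simp [CNaux]
  | succ m ih =>
    rw [List.replicate_succ, CNaux_cons, ih, crossingMatrix_mul_braidSwap, succ_nsmul']

lemma exists_CNaux_eq_add_two_nsmul (w : List (Fin (n - 1))) (π : Equiv.Perm (Fin n))
    (D : Matrix (Fin n) (Fin n) ℕ) (hD : D.IsSymm)
    (hsupp : ∀ a b, CNaux n π w a b = 0 → D a b = 0) :
    ∃ w' : List (Fin (n - 1)),
      CNaux n π w' = CNaux n π w + 2 • D ∧ finalPerm n π w' = finalPerm n π w := by
  induction w generalizing π D with
  | nil =>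
    refine ⟨[], ?_, rfl⟩
    have : D = 0 := Matrix.ext fun a b => hsupp a b rfl
    simp [this]
  | cons k w ih =>
    set i := π (posL n k)
    set j := π (posR n k)
    have hX : ∀ a b, crossingMatrix n π k a b = if s(a, b) = s(i, j) then 1 else 0 :=
      crossingMatrix_apply π k
    have hD_apply : ∀ a b, s(a, b) = s(i, j) → D a b = D i j := by
      intro a b hab
      rcases Sym2.eq_iff.mp hab with ⟨rfl, rfl⟩ | ⟨rfl, rfl⟩
      exacts [rfl, hD.apply _ _]
    -- All the extra crossings of the pair `{i, j}` are inserted at this letter.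
    set D' : Matrix (Fin n) (Fin n) ℕ := fun a b => if s(a, b) = s(i, j) then 0 else D a b
    have hD'symm : D'.IsSymm := Matrix.IsSymm.ext fun a b => by
      simp only [D', Sym2.eq_swap, hD.apply]
    have hD'supp : ∀ a b, CNaux n (π * braidSwap n k) w a b = 0 → D' a b = 0 := by
      intro a b h
      by_cases hab : s(a, b) = s(i, j)
      · simp only [D', hab, if_true]
      · simp only [D', hab, if_false]
        apply hsupp
        rw [CNaux_cons, Matrix.add_apply, hX, if_neg hab, h]
    obtain ⟨w', hCN, hperm⟩ := ih (π * braidSwap n k) D' hD'symm hD'supp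
    refine ⟨List.replicate (2 * D i j + 1) k ++ w', ?_, ?_⟩
    · rw [CNaux_append, CNaux_replicate, finalPerm_replicate, braidSwap_pow_odd, hCN, CNaux_cons]
      ext a b
      simp only [Matrix.add_apply, Matrix.smul_apply, smul_eq_mul, hX]
      by_cases hab : s(a, b) = s(i, j)
      · simp only [D', hab, if_true, hD_apply a b hab]
        ring
      · simp only [D', hab, if_false]
        ring
    · rw [finalPerm_append, finalPerm_replicate, braidSwap_pow_odd, hperm]
      rfl

lemma braidSwap_lt_braidSwap_iff (k : Fin (n - 1)) (p q : Fin n) :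
    braidSwap n k p < braidSwap n k q ↔ (p < q ↔ s(p, q) ≠ s(posL n k, posR n k)) := by
  simp only [braidSwap, Equiv.swap_apply_def]
  split_ifs <;> simp only [posL, posR, Fin.lt_def, Fin.ext_iff, Sym2.eq_iff, ne_eq] at * <;> omega

lemma inv_mul_braidSwap_lt_iff (π : Equiv.Perm (Fin n)) (k : Fin (n - 1)) (a b : Fin n) :
    (π * braidSwap n k)⁻¹ a < (π * braidSwap n k)⁻¹ b ↔
      (π⁻¹ a < π⁻¹ b ↔ Even (crossingMatrix n π k a b)) := by
  have hpos : s(a, b) = s(π (posL n k), π (posR n k)) ↔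
      s(π⁻¹ a, π⁻¹ b) = s(posL n k, posR n k) := by
    simp only [Sym2.eq_iff, Equiv.Perm.inv_def, Equiv.symm_apply_eq]
  rw [mul_inv_rev, Equiv.Perm.mul_apply, Equiv.Perm.mul_apply, braidSwap, Equiv.swap_inv,
    ← braidSwap, braidSwap_lt_braidSwap_iff, crossingMatrix_apply]
  simp only [hpos]
  split_ifs <;> simp_all

lemma inv_finalPerm_lt_iff (π : Equiv.Perm (Fin n)) (w : List (Fin (n - 1))) (a b : Fin n) :
    (finalPerm n π w)⁻¹ a < (finalPerm n π w)⁻¹ b ↔ (π⁻¹ a < π⁻¹ b ↔ Even (CNaux n π w a b)) := by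
  induction w generalizing π with
  | nil => simp [finalPerm, CNaux]
  | cons k w ih =>
    rw [finalPerm, ih, inv_mul_braidSwap_lt_iff, CNaux_cons, Matrix.add_apply, Nat.even_add]
    tauto

lemma isPure_of_even (w : List (Fin (n - 1))) (h : ∀ a b, Even (CN n w a b)) : IsPure n w := by
  have hmono : StrictMono fun a => (finalPerm n 1 w)⁻¹ a := fun a b hab =>
    (inv_finalPerm_lt_iff 1 w a b).mpr (iff_of_true (by simpa using hab) (h a b))
  exact inv_eq_one.mp (Equiv.ext fun a => hmono.apply_eq)

end BraidWord

theorem stmt7_general (n : ℕ) (M : Matrix (Fin n) (Fin n) ℕ)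
    (hsymm : M.IsSymm)
    (heven : ∀ i j, Even (M i j))
    (h02 : ∃ w : List (Fin (n - 1)),
      CN n w = fun i j => if M i j = 0 then 0 else 2) :
    ∃ w : List (Fin (n - 1)), IsPure n w ∧ CN n w = M := by
  obtain ⟨w, hw⟩ := h02
  have hCN : ∀ a b, CN n w a b = if M a b = 0 then 0 else 2 := fun a b => congrFun₂ hw a b
  -- `M = CN n w + 2 • D`: every pair that crosses in `w` crosses `M a b / 2 - 1` more times.
  set D : Matrix (Fin n) (Fin n) ℕ := fun a b => M a b / 2 - if M a b = 0 then 0 else 1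
  have hM : CN n w + 2 • D = M := by
    ext a b
    obtain ⟨r, hr⟩ := heven a b
    rw [Matrix.add_apply, Matrix.smul_apply, smul_eq_mul, hCN]
    simp only [D]
    split_ifs <;> omega
  have hD : D.IsSymm := Matrix.IsSymm.ext fun a b => by simp only [D, hsymm.apply]
  have hsupp : ∀ a b, CN n w a b = 0 → D a b = 0 := fun a b h => by
    have hMab : M a b = 0 := by simpa [hCN] using h
    simp [D, hMab]
  obtain ⟨w', hCN', hperm⟩ := exists_CNaux_eq_add_two_nsmul w 1 D hD hsupp
  refine ⟨w', ?_, hCN'.trans hM⟩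
  have hpure : IsPure n w := isPure_of_even w fun a b => by
    rw [hCN]; split_ifs <;> decide
  exact hperm.trans hpure

theorem stmt7 (n : ℕ) (M : Matrix (Fin n) (Fin n) ℕ)
    (hsymm : M.IsSymm) (hdiag : ∀ i, M i i = 0)
    (heven : ∀ i j, Even (M i j))
    (h02 : ∃ w : List (Fin (n - 1)),
      CN n w = fun i j => if M i j = 0 then 0 else 2) :
    ∃ w : List (Fin (n - 1)), IsPure n w ∧ CN n w = M :=
  stmt7_general n M hsymm heven h02
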